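/- Let G be a finite nonabelian group of order greater than 6 containing an abelian subgroup A of index 2. Then G has a strict 2-split decomposition with respect to A if and only if |Z(G)| ≤ 2. -/

import Mathlib

/-- An `n`-split decomposition of a group `G` with respect to an abelian subgroup `A`:
`G` is partitioned as the disjoint union of `A` and nonempty subsets `B 1, ..., B n`,
such that no two distinct elements within any single `B i` commute. -/
def IsSplitDecomp {G : Type*} [Group G] (A : Subgroup G) {n : ℕ} (B : Fin n → Set G) : Prop :=
  IsMulCommutative A ∧
  (A : Set G) ∪ (⋃ i, B i) = Set.univ ∧
  (∀ i, Disjoint (A : Set G) (B i)) ∧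
  (Pairwise fun i j => Disjoint (B i) (B j)) ∧
  (∀ i, (B i).Nonempty) ∧
  ∀ i, ∀ x ∈ B i, ∀ y ∈ B i, x ≠ y → ¬ Commute x y

/-- A strict `n`-split decomposition: an `n`-split decomposition with `|B i| ≥ 2` for all `i`. -/
def IsStrictSplitDecomp {G : Type*} [Group G] (A : Subgroup G) {n : ℕ} (B : Fin n → Set G) : Prop :=
  IsSplitDecomp A B ∧ ∀ i, 2 ≤ (B i).ncard

/-! For `x, y ∉ A` the element `x⁻¹ * y` lies in `A`, and since `G = A ∪ x A` with `A` abelian,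
`x` and `y` commute iff `x⁻¹ * y` is central. Moreover `Z(G) ≤ A`, since a central element outside
`A` would make `G` abelian. Hence on `G \ A` commuting means lying in a common coset of `Z(G)`.
Such a coset consists of pairwise commuting elements, so each block of a decomposition meets it at
most once, which forces `|Z(G)| ≤ 2`. Conversely, if `Z(G) = 1` every split of `G \ A` (which has
`|G| / 2 ≥ 4` elements) into two sets of size at least two works, and if `Z(G) = {1, z}` one puts
`x` and `z * x` into different blocks. -/

theorem Function.Involutive.exists_image_eq_sdiff {α : Type*} {f : α → α}
    (hf : Function.Involutive f) {s : Set α} (hs : Set.MapsTo f s s) (hfix : ∀ x ∈ s, f x ≠ x) :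
    ∃ t ⊆ s, f '' t = s \ t := by
  let _ : LinearOrder α := IsWellOrder.linearOrder WellOrderingRel
  refine ⟨{x ∈ s | x < f x}, Set.sep_subset _ _, ?_⟩
  ext y
  constructor
  · rintro ⟨x, ⟨hx, hlt⟩, rfl⟩
    refine ⟨hs hx, fun ⟨_, hgt⟩ => ?_⟩
    rw [hf x] at hgt
    exact lt_asymm hlt hgt
  · rintro ⟨hy, hyt⟩
    have hle : f y ≤ y := not_lt.mp fun hlt => hyt ⟨hy, hlt⟩
    exact ⟨f y, ⟨hs hy, by rw [hf y]; exact hle.lt_of_ne (hfix y hy)⟩, hf y⟩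

namespace Subgroup

variable {G : Type*} [Group G] {A : Subgroup G}

theorem two_mul_ncard_compl_of_index_eq_two [Finite G] (hidx : A.index = 2) :
    2 * (A : Set G)ᶜ.ncard = Nat.card G := by
  have hsum := Set.ncard_add_ncard_compl (A : Set G)
  have hmul := A.card_mul_index
  rw [hidx] at hmul
  rw [← Nat.card_coe_set_eq] at hsum
  change Nat.card A + _ = _ at hsum
  omega

variable [IsMulCommutative A]

theorem mem_center_of_commute_of_index_eq_two (hidx : A.index = 2) {a x : G} (ha : a ∈ A)
    (hx : x ∉ A) (hxa : Commute x a) : a ∈ center G := by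
  rw [mem_center_iff]
  intro g
  by_cases hg : g ∈ A
  · exact setLike_mul_comm hg ha
  · have hgx : g * x⁻¹ ∈ A := (mul_mem_iff_of_index_two hidx).mpr (iff_of_false hg (by simpa))
    simpa using (Commute.mul_left (setLike_mul_comm hgx ha) hxa).eq

theorem center_le_of_index_eq_two (hidx : A.index = 2) (hG : ¬ ∀ a b : G, Commute a b) :
    center G ≤ A := by
  intro z hz
  by_contra hzA
  have hAZ : A ≤ center G := fun a ha =>
    mem_center_of_commute_of_index_eq_two hidx ha hzA (mem_center_iff.mp hz a).symm
  refine hG fun a b => mem_center_iff.mp ?_ a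
  by_cases hb : b ∈ A
  · exact hAZ hb
  · have hbz : b * z⁻¹ ∈ A :=
      (mul_mem_iff_of_index_two hidx).mpr (iff_of_false hb (by simpa))
    simpa using mul_mem (hAZ hbz) hz

theorem commute_iff_inv_mul_mem_center_of_index_eq_two (hidx : A.index = 2) {x y : G}
    (hx : x ∉ A) (hy : y ∉ A) : Commute x y ↔ x⁻¹ * y ∈ center G := by
  constructor
  · intro hxy
    have hxy' : x⁻¹ * y ∈ A := (mul_mem_iff_of_index_two hidx).mpr (iff_of_false (by simpa) hy)
    exact mem_center_of_commute_of_index_eq_two hidx hxy' hx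
      ((Commute.inv_right (.refl x)).mul_right hxy)
  · intro hc
    simpa using (Commute.refl x).mul_right (mem_center_iff.mp hc x)

end Subgroup

namespace IsSplitDecomp

variable {G : Type*} [Group G] {A : Subgroup G} {n : ℕ} {B : Fin n → Set G}

theorem ncard_le_of_pairwise_commute (hB : IsSplitDecomp A B) {S : Set G}
    (hSA : Disjoint S A) (hS : S.Pairwise Commute) : S.ncard ≤ n := by
  obtain ⟨-, hcover, -, -, -, hanti⟩ := hB
  have hmem : ∀ s : S, ∃ i, (s : G) ∈ B i := fun s => by
    have : (s : G) ∈ (A : Set G) ∪ ⋃ i, B i := hcover ▸ Set.mem_univ _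
    simpa [Set.disjoint_left.mp hSA s.2] using this
  choose f hf using hmem
  have hinj : Function.Injective f := fun s t hst => by
    by_contra hne
    have hne' : (s : G) ≠ t := Subtype.coe_ne_coe.mpr hne
    exact hanti _ _ (hf s) _ (hst ▸ hf t) hne' (hS s.2 t.2 hne')
  simpa [Nat.card_coe_set_eq] using Nat.card_le_card_of_injective f hinj

theorem card_center_le (hB : IsSplitDecomp A B) (hZA : Subgroup.center G ≤ A) (hA : A ≠ ⊤) :
    Nat.card (Subgroup.center G) ≤ n := by
  obtain ⟨x, hx⟩ := SetLike.exists_not_mem_of_ne_top A hA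
  have hS : ((· * x) '' (Subgroup.center G : Set G)).Pairwise Commute := by
    rintro _ ⟨z, hz, rfl⟩ _ ⟨w, hw, rfl⟩ -
    have hzx : Commute z x := (Subgroup.mem_center_iff.mp hz x).symm
    exact .mul_right (Subgroup.mem_center_iff.mp hw _) (hzx.mul_left (.refl x))
  have hSA : Disjoint ((· * x) '' (Subgroup.center G : Set G)) A := by
    rw [Set.disjoint_left]
    rintro _ ⟨z, hz, rfl⟩ hzx
    exact hx (by simpa using A.mul_mem (A.inv_mem (hZA hz)) hzx)
  have := hB.ncard_le_of_pairwise_commute hSA hS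
  rwa [Set.ncard_image_of_injective _ (mul_left_injective x), ← Nat.card_coe_set_eq] at this

end IsSplitDecomp

theorem isStrictSplitDecomp_of_union_eq_compl {G : Type*} [Group G] {A : Subgroup G}
    [IsMulCommutative A] {B₁ B₂ : Set G} (hcover : B₁ ∪ B₂ = (A : Set G)ᶜ)
    (hdisj : Disjoint B₁ B₂) (h₁ : B₁.Pairwise fun x y => ¬ Commute x y)
    (h₂ : B₂.Pairwise fun x y => ¬ Commute x y) (hc₁ : 2 ≤ B₁.ncard) (hc₂ : 2 ≤ B₂.ncard) :
    IsStrictSplitDecomp A ![B₁, B₂] := by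
  have hsub₁ : B₁ ⊆ (A : Set G)ᶜ := hcover ▸ Set.subset_union_left
  have hsub₂ : B₂ ⊆ (A : Set G)ᶜ := hcover ▸ Set.subset_union_right
  refine ⟨⟨‹_›, ?_, ?_, ?_, ?_, ?_⟩, ?_⟩
  · rw [Set.eq_univ_iff_forall]
    intro g
    by_cases hg : g ∈ A
    · exact .inl hg
    · have : g ∈ B₁ ∪ B₂ := hcover ▸ hg
      simpa [Fin.exists_fin_two, hg] using this
  · simpa [Fin.forall_fin_two, ← Set.subset_compl_iff_disjoint_left] using ⟨hsub₁, hsub₂⟩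
  · intro i j hij
    fin_cases i <;> fin_cases j <;> simp_all [hdisj.symm]
  · simpa [Fin.forall_fin_two] using
      ⟨Set.nonempty_of_ncard_ne_zero (by omega), Set.nonempty_of_ncard_ne_zero (by omega)⟩
  · simpa [Fin.forall_fin_two] using ⟨fun x hx y hy => h₁ hx hy, fun x hx y hy => h₂ hx hy⟩
  · simpa [Fin.forall_fin_two] using ⟨hc₁, hc₂⟩

section IndexTwo

variable {G : Type*} [Group G] {A : Subgroup G} [IsMulCommutative A]

open Subgroup

theorem exists_isStrictSplitDecomp_of_center_eq_bot (hidx : A.index = 2) (hZ : center G = ⊥)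
    (hcard : 4 ≤ (A : Set G)ᶜ.ncard) : ∃ B : Fin 2 → Set G, IsStrictSplitDecomp A B := by
  have hanti : (A : Set G)ᶜ.Pairwise fun x y => ¬ Commute x y := fun x hx y hy hne hxy => by
    rw [commute_iff_inv_mul_mem_center_of_index_eq_two hidx hx hy, hZ, mem_bot,
      inv_mul_eq_one] at hxy
    exact hne hxy
  obtain ⟨B₁, hB₁, hc₁⟩ := Set.exists_subset_card_eq (show 2 ≤ (A : Set G)ᶜ.ncard by omega)
  have hc₂ : 2 ≤ ((A : Set G)ᶜ \ B₁).ncard := by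
    rw [Set.ncard_sdiff hB₁ (Set.finite_of_ncard_ne_zero (by omega))]
    omega
  exact ⟨_, isStrictSplitDecomp_of_union_eq_compl (Set.union_sdiff_cancel hB₁)
    Set.disjoint_sdiff_right (hanti.mono hB₁) (hanti.mono Set.sdiff_subset) hc₁.ge hc₂⟩

theorem exists_isStrictSplitDecomp_of_card_center_eq_two (hidx : A.index = 2)
    (hZA : center G ≤ A) (hZ : Nat.card (center G) = 2) (hcard : 4 ≤ (A : Set G)ᶜ.ncard) :
    ∃ B : Fin 2 → Set G, IsStrictSplitDecomp A B := by
  obtain ⟨⟨z, hz⟩, hz1, huniq⟩ := (Nat.card_eq_two_iff' (1 : center G)).mp hZ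
  replace hz1 : z ≠ 1 := fun h => hz1 (Subtype.ext h)
  have heq_z : ∀ c ∈ center G, c ≠ 1 → c = z := fun c hc hc1 =>
    congrArg Subtype.val (huniq ⟨c, hc⟩ fun h => hc1 (congrArg Subtype.val h))
  have hzz : z * z = 1 := by
    nth_rewrite 1 [← heq_z z⁻¹ (inv_mem hz) (inv_ne_one.mpr hz1)]
    exact inv_mul_cancel z
  have hinv : Function.Involutive (· * z) := fun g => by simp [mul_assoc, hzz]
  have hmaps : Set.MapsTo (· * z) (A : Set G)ᶜ (A : Set G)ᶜ := fun g hg hgz =>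
    hg (by simpa using mul_mem hgz (inv_mem (hZA hz)))
  have hcomm : ∀ x ∉ A, ∀ y ∉ A, x ≠ y → Commute x y → y = x * z := by
    intro x hx y hy hne hxy
    rw [commute_iff_inv_mul_mem_center_of_index_eq_two hidx hx hy] at hxy
    rw [← heq_z _ hxy fun h => hne (inv_mul_eq_one.mp h), mul_inv_cancel_left]
  obtain ⟨t, hts, ht⟩ := hinv.exists_image_eq_sdiff hmaps fun g _ h => hz1 (mul_eq_left.mp h)
  have hfin : (A : Set G)ᶜ.Finite := Set.finite_of_ncard_ne_zero (by omega)
  have hcard_eq : ((A : Set G)ᶜ \ t).ncard = t.ncard := by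
    rw [← ht, Set.ncard_image_of_injective _ (mul_left_injective z)]
  have hsum := Set.ncard_sdiff_add_ncard_of_subset hts hfin
  refine ⟨_, isStrictSplitDecomp_of_union_eq_compl (Set.union_sdiff_cancel hts)
    Set.disjoint_sdiff_right ?_ ?_ (by omega) (by omega)⟩
  · intro x hx y hy hne hxy
    have hy' : y ∈ (A : Set G)ᶜ \ t := by
      rw [← ht, hcomm x (hts hx) y (hts hy) hne hxy]
      exact Set.mem_image_of_mem _ hx
    exact hy'.2 hy
  · intro x hx y hy hne hxy
    obtain ⟨w, hw, rfl⟩ : x ∈ (· * z) '' t := by rwa [ht]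
    have hyw : y = w := (hcomm _ hx.1 y hy.1 hne hxy).trans (hinv w)
    exact hy.2 (hyw ▸ hw)

end IndexTwo

theorem strict_two_split_index_two_iff_general {G : Type*} [Group G]
    (hG : ¬ ∀ a b : G, Commute a b) (hcard : 6 < Nat.card G)
    (A : Subgroup G) (hA : IsMulCommutative A) (hidx : A.index = 2) :
    (∃ B : Fin 2 → Set G, IsStrictSplitDecomp A B) ↔
      Nat.card (Subgroup.center G) ≤ 2 := by
  have : Finite G := Nat.finite_of_card_ne_zero (by omega)
  have hZA := Subgroup.center_le_of_index_eq_two hidx hG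
  constructor
  · rintro ⟨B, hB, -⟩
    exact hB.card_center_le hZA fun h => by simp [h] at hidx
  · intro hZ
    have hcompl : 4 ≤ (A : Set G)ᶜ.ncard := by
      have := Subgroup.two_mul_ncard_compl_of_index_eq_two hidx
      omega
    obtain hZ1 | hZ2 : Nat.card (Subgroup.center G) = 1 ∨ Nat.card (Subgroup.center G) = 2 := by
      have := Nat.card_pos (α := Subgroup.center G)
      omega
    · exact exists_isStrictSplitDecomp_of_center_eq_bot hidx (Subgroup.card_eq_one.mp hZ1) hcompl
    · exact exists_isStrictSplitDecomp_of_card_center_eq_two hidx hZA hZ2 hcompl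

theorem strict_two_split_index_two_iff {G : Type*} [Group G] [Finite G]
    (hG : ¬ ∀ a b : G, Commute a b) (hcard : 6 < Nat.card G)
    (A : Subgroup G) (hA : IsMulCommutative A) (hidx : A.index = 2) :
    (∃ B : Fin 2 → Set G, IsStrictSplitDecomp A B) ↔
      Nat.card (Subgroup.center G) ≤ 2 :=
  strict_two_split_index_two_iff_general hG hcard A hA hidx
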